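/- arXiv:1505.06182 — 2 statements merged into one kernel-verified Lean document; each statement's English description precedes it below -/
import Mathlib

section
/- Second-order structure of a (1, μ1)-proper variable (ℂ^{μ1}-properness of Vía et al.): let μ1, μ2 be orthogonal pure unit quaternions, and let Q be a square-integrable quaternion random variable on (Ω, P) whose law is invariant under right Clifford translation q ↦ q·μ1 (i.e. the law of ω ↦ Q(ω)·μ1 equals the law of Q). Let Z1 := (Q − μ1·Q·μ1)/2 and Z2 := −((Q + μ1·Q·μ1)/2)·μ2 be its Cayley–Dickson components, taking values in ℂ_{μ1} = span_ℝ{1, μ1}. Then Z1 and Z2 are proper complex variables that are uncorrelated: E[Z1²] = 0, E[Z2²] = 0, and E[Z1·star(Z2)] = 0. -/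
/-!
The law of `Q` is invariant under `q ↦ q·μ1`, so `E[f(Q)] = 0` whenever `f(q·μ1) = -f(q)`.
Right multiplication by `μ1` maps the Cayley–Dickson components `z1, z2` of `q` to `z1·μ1` and
`-z2·μ1`, and both components commute with `μ1` (they lie in `ℂ_{μ1}`). Since `μ1² = -1`,
each of `z1²`, `z2²` and `z1·star z2` changes sign, so all three expectations vanish.
-/

open Quaternion MeasureTheory

noncomputable instance : MeasurableSpace ℍ[ℝ] := borel ℍ[ℝ]
instance : BorelSpace ℍ[ℝ] := ⟨rfl⟩

theorem integral_comp_eq_zero_of_map_comp_eq_of_comp_eq_neg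
    {Ω X E : Type*} [MeasurableSpace Ω] [MeasurableSpace X] [NormedAddCommGroup E]
    [NormedSpace ℝ E] {P : Measure Ω} {Q : Ω → X} {T : X → X} {f : X → E}
    (hQ : Measurable Q) (hT : Measurable T) (hf : StronglyMeasurable f)
    (hmap : P.map (fun ω => T (Q ω)) = P.map Q) (hfT : ∀ x, f (T x) = -f x) :
    ∫ ω, f (Q ω) ∂P = 0 := by
  have : IsAddTorsionFree E := .of_isTorsionFree ℝ E
  refine self_eq_neg.mp ?_
  calc ∫ ω, f (Q ω) ∂P = ∫ x, f x ∂P.map Q :=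
        (integral_map hQ.aemeasurable hf.aestronglyMeasurable).symm
    _ = ∫ ω, f (T (Q ω)) ∂P := by
        rw [← hmap]
        exact integral_map (hT.comp hQ).aemeasurable hf.aestronglyMeasurable
    _ = -∫ ω, f (Q ω) ∂P := by simp only [hfT, integral_neg]

namespace Quaternion

theorem mul_self_eq_neg_one {μ : ℍ[ℝ]} (hre : μ.re = 0) (hnorm : ‖μ‖ = 1) : μ * μ = -1 := by
  rw [← sq, sq_eq_neg_normSq.mpr hre, normSq_eq_norm_mul_self, hnorm, mul_one, coe_one]

theorem mul_eq_neg_mul_of_re_eq_zero {μ ν : ℍ[ℝ]} (hμ : μ.re = 0) (hν : ν.re = 0)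
    (horth : (μ * ν).re = 0) : μ * ν = -(ν * μ) := by
  ext <;> simp_all only [re_mul, imI_mul, imJ_mul, imK_mul, re_neg, imI_neg, imJ_neg, imK_neg] <;>
    linarith

end Quaternion

section Ring

variable {R : Type*} [Ring R] {μ : R}

theorem mul_sq_of_commute (hμ : μ * μ = -1) {z : R} (hz : Commute μ z) : (z * μ) ^ 2 = -z ^ 2 :=
  calc (z * μ) ^ 2 = z * (μ * z) * μ := by noncomm_ring
    _ = z * z * (μ * μ) := by rw [hz.eq]; noncomm_ring
    _ = -z ^ 2 := by rw [hμ]; noncomm_ring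

theorem mul_mul_star_mul [StarRing R] (hμ : μ * μ = -1) (hstar : star μ = -μ) (a b : R) :
    a * μ * star (b * μ) = a * star b :=
  calc a * μ * star (b * μ) = -(a * (μ * μ) * star b) := by
        rw [star_mul, hstar]; noncomm_ring
    _ = a * star b := by rw [hμ]; noncomm_ring

end Ring

section CayleyDickson

variable {R : Type*} [DivisionRing R] {μ ν : R}

/-- First Cayley–Dickson component `z1` of `q` with respect to `μ`. -/
def cdFst (μ q : R) : R := (q - μ * q * μ) / 2

/-- Second Cayley–Dickson component `z2` of `q` with respect to `μ, ν`. -/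
def cdSnd (μ ν q : R) : R := -((q + μ * q * μ) / 2) * ν

theorem div_two_mul (x y : R) : x / 2 * y = x * y / 2 := by
  rw [div_eq_mul_inv, div_eq_mul_inv, mul_assoc, mul_assoc, (Commute.ofNat_left 2 y).inv_left₀.eq]

theorem cdFst_mul_right (μ q : R) : cdFst μ (q * μ) = cdFst μ q * μ := by
  rw [cdFst, cdFst, div_two_mul]
  noncomm_ring

theorem cdSnd_mul_right (hμν : μ * ν = -(ν * μ)) (q : R) :
    cdSnd μ ν (q * μ) = -(cdSnd μ ν q * μ) := by
  have h : q * μ + μ * (q * μ) * μ = (q + μ * q * μ) * μ := by noncomm_ring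
  rw [cdSnd, cdSnd, h, ← div_two_mul, neg_mul, neg_mul, mul_assoc, hμν]
  noncomm_ring

theorem commute_cdFst (hμ : μ * μ = -1) (q : R) : Commute μ (cdFst μ q) := by
  refine Commute.div_right ?_ (Commute.ofNat_right μ 2)
  calc μ * (q - μ * q * μ) = μ * q - (μ * μ) * q * μ := by noncomm_ring
    _ = q * μ - μ * q * (μ * μ) := by rw [hμ]; noncomm_ring
    _ = (q - μ * q * μ) * μ := by noncomm_ring

theorem commute_cdSnd (hμ : μ * μ = -1) (hμν : μ * ν = -(ν * μ)) (q : R) :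
    Commute μ (cdSnd μ ν q) := by
  have hw : μ * ((q + μ * q * μ) / 2) = -((q + μ * q * μ) / 2 * μ) := by
    rw [div_two_mul, ← neg_div, mul_div_assoc']
    congr 1
    calc μ * (q + μ * q * μ) = μ * q + (μ * μ) * q * μ := by noncomm_ring
      _ = -(q * μ + μ * q * (μ * μ)) := by rw [hμ]; noncomm_ring
      _ = -((q + μ * q * μ) * μ) := by noncomm_ring
  set w := (q + μ * q * μ) / 2
  calc μ * (-w * ν) = -(μ * w * ν) := by noncomm_ring
    _ = w * (μ * ν) := by rw [hw]; noncomm_ring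
    _ = -w * ν * μ := by rw [hμν]; noncomm_ring

theorem cdFst_mul_right_sq (hμ : μ * μ = -1) (q : R) :
    cdFst μ (q * μ) ^ 2 = -cdFst μ q ^ 2 := by
  rw [cdFst_mul_right, mul_sq_of_commute hμ (commute_cdFst hμ q)]

theorem cdSnd_mul_right_sq (hμ : μ * μ = -1) (hμν : μ * ν = -(ν * μ)) (q : R) :
    cdSnd μ ν (q * μ) ^ 2 = -cdSnd μ ν q ^ 2 := by
  rw [cdSnd_mul_right hμν, neg_sq, mul_sq_of_commute hμ (commute_cdSnd hμ hμν q)]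

theorem cdFst_mul_star_cdSnd_mul_right [StarRing R] (hμ : μ * μ = -1) (hstar : star μ = -μ)
    (hμν : μ * ν = -(ν * μ)) (q : R) :
    cdFst μ (q * μ) * star (cdSnd μ ν (q * μ)) = -(cdFst μ q * star (cdSnd μ ν q)) := by
  rw [cdFst_mul_right, cdSnd_mul_right hμν, star_neg, mul_neg, mul_mul_star_mul hμ hstar]

@[fun_prop]
theorem continuous_cdFst [TopologicalSpace R] [IsTopologicalRing R] (μ : R) :
    Continuous (cdFst μ) := by
  unfold cdFst
  fun_prop

@[fun_prop]
theorem continuous_cdSnd [TopologicalSpace R] [IsTopologicalRing R] (μ ν : R) :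
    Continuous (cdSnd μ ν) := by
  unfold cdSnd
  fun_prop

end CayleyDickson

theorem second_order_structure_one_mu1_proper_general
    {Ω : Type*} [MeasurableSpace Ω] (P : Measure Ω)
    (μ1 μ2 : ℍ[ℝ]) (h1re : μ1.re = 0) (h1 : ‖μ1‖ = 1)
    (h2re : μ2.re = 0) (horth : (μ1 * μ2).re = 0)
    (Q : Ω → ℍ[ℝ]) (hQmeas : Measurable Q)
    (hprop : Measure.map (fun ω => Q ω * μ1) P = Measure.map Q P)
    (Z1 Z2 : Ω → ℍ[ℝ])
    (hZ1 : ∀ ω, Z1 ω = (Q ω - μ1 * Q ω * μ1) / 2)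
    (hZ2 : ∀ ω, Z2 ω = -((Q ω + μ1 * Q ω * μ1) / 2) * μ2) :
    (∫ ω, Z1 ω ^ 2 ∂P) = 0 ∧
    (∫ ω, Z2 ω ^ 2 ∂P) = 0 ∧
    (∫ ω, Z1 ω * star (Z2 ω) ∂P) = 0 := by
  have hμ1 : μ1 * μ1 = -1 := mul_self_eq_neg_one h1re h1
  have hstar : star μ1 = -μ1 := star_eq_neg.mpr h1re
  have hμ12 : μ1 * μ2 = -(μ2 * μ1) := mul_eq_neg_mul_of_re_eq_zero h1re h2re horth
  have odd_integral_eq_zero (f : ℍ[ℝ] → ℍ[ℝ]) (hf : Continuous f)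
      (hodd : ∀ q, f (q * μ1) = -f q) : ∫ ω, f (Q ω) ∂P = 0 :=
    integral_comp_eq_zero_of_map_comp_eq_of_comp_eq_neg hQmeas (measurable_mul_const μ1)
      hf.stronglyMeasurable hprop hodd
  obtain rfl : Z1 = fun ω => cdFst μ1 (Q ω) := funext hZ1
  obtain rfl : Z2 = fun ω => cdSnd μ1 μ2 (Q ω) := funext hZ2
  exact ⟨odd_integral_eq_zero (cdFst μ1 · ^ 2) (by fun_prop) (cdFst_mul_right_sq hμ1),
    odd_integral_eq_zero (cdSnd μ1 μ2 · ^ 2) (by fun_prop) (cdSnd_mul_right_sq hμ1 hμ12),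
    odd_integral_eq_zero (fun q => cdFst μ1 q * star (cdSnd μ1 μ2 q)) (by fun_prop)
      (cdFst_mul_star_cdSnd_mul_right hμ1 hstar hμ12)⟩

/-- Second-order structure of a `(1, μ1)`-proper quaternion random variable
(invariant under the right Clifford translation `q ↦ q·μ1`): its Cayley–Dickson
components are proper and uncorrelated:
`E[Z1²] = 0`, `E[Z2²] = 0` and `E[Z1·star(Z2)] = 0`. -/
theorem second_order_structure_one_mu1_proper
    {Ω : Type*} [MeasurableSpace Ω] (P : Measure Ω) [IsProbabilityMeasure P]
    (μ1 μ2 : ℍ[ℝ]) (h1re : μ1.re = 0) (h1 : ‖μ1‖ = 1)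
    (h2re : μ2.re = 0) (h2 : ‖μ2‖ = 1) (horth : (μ1 * μ2).re = 0)
    (Q : Ω → ℍ[ℝ]) (hQmeas : Measurable Q) (hQ : MemLp Q 2 P)
    (hprop : Measure.map (fun ω => Q ω * μ1) P = Measure.map Q P)
    (Z1 Z2 : Ω → ℍ[ℝ])
    (hZ1 : ∀ ω, Z1 ω = (Q ω - μ1 * Q ω * μ1) / 2)
    (hZ2 : ∀ ω, Z2 ω = -((Q ω + μ1 * Q ω * μ1) / 2) * μ2) :
    (∫ ω, Z1 ω ^ 2 ∂P) = 0 ∧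
    (∫ ω, Z2 ω ^ 2 ∂P) = 0 ∧
    (∫ ω, Z1 ω * star (Z2 ω) ∂P) = 0 :=
  second_order_structure_one_mu1_proper_general P μ1 μ2 h1re h1 h2re horth Q hQmeas hprop Z1 Z2 hZ1
    hZ2
end

section
/- Second-order structure of a (μ1, μ1)-proper variable: let μ1, μ2 be orthogonal pure unit quaternions, and let Q be a square-integrable quaternion random variable on (Ω, P) whose law is invariant under q ↦ μ1·q·μ1 (i.e. the law of ω ↦ μ1·Q(ω)·μ1 equals the law of Q). Let Z1 := (Q − μ1·Q·μ1)/2 and Z2 := −((Q + μ1·Q·μ1)/2)·μ2 be its Cayley–Dickson components, taking values in ℂ_{μ1} = span_ℝ{1, μ1}. Then Z1 and Z2 are neither correlated nor pseudo-correlated: E[Z1·Z2] = 0 and E[Z1·star(Z2)] = 0. -/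
open Quaternion MeasureTheory

/-!
Conjugation `q ↦ μ₁ q μ₁` is an involution of `ℍ` (as `μ₁² = -1`) that flips the sign of
`Z₁ = (q - μ₁ q μ₁)/2` and fixes `(q + μ₁ q μ₁)/2`, hence `Z₂`. So `Z₁ Z₂` and `Z₁ Z₂*` are odd
functions of `Q` for this involution, and the expectation of an odd function of a variable
whose law is invariant under the involution vanishes.
-/

theorem MeasureTheory.integral_comp_eq_zero_of_map_eq_of_odd
    {Ω α E : Type*} [MeasurableSpace Ω] [MeasurableSpace α]
    [NormedAddCommGroup E] [NormedSpace ℝ E] {P : Measure Ω}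
    {X : Ω → α} (hX : AEMeasurable X P) {T : α → α} (hT : Measurable T)
    (hmap : P.map (fun ω => T (X ω)) = P.map X)
    {F : α → E} (hF : AEStronglyMeasurable F (P.map X)) (hodd : ∀ a, F (T a) = -F a) :
    ∫ ω, F (X ω) ∂P = 0 := by
  have hTX : AEMeasurable (fun ω => T (X ω)) P := hT.comp_aemeasurable hX
  have hflip : ∫ ω, F (X ω) ∂P = -∫ ω, F (X ω) ∂P :=
    calc ∫ ω, F (X ω) ∂P
        = ∫ a, F a ∂(P.map X) := (integral_map hX hF).symm
      _ = ∫ a, F a ∂(P.map fun ω => T (X ω)) := by rw [hmap]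
      _ = ∫ ω, F (T (X ω)) ∂P := integral_map hTX (hmap ▸ hF)
      _ = -∫ ω, F (X ω) ∂P := by simp only [hodd, integral_neg]
  have htwice : (2 : ℝ) • ∫ ω, F (X ω) ∂P = 0 := by
    rw [two_smul]; nth_rw 1 [hflip]; exact neg_add_cancel _
  exact (smul_eq_zero.mp htwice).resolve_left two_ne_zero

theorem Quaternion.mul_self_eq_neg_one_s18 {μ : ℍ[ℝ]} (hre : μ.re = 0) (hnorm : ‖μ‖ = 1) :
    μ * μ = -1 := by
  have h := Quaternion.sq_eq_neg_normSq.mpr hre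
  rwa [sq, Quaternion.normSq_eq_norm_mul_self, hnorm, mul_one, coe_one] at h

theorem mul_mul_mul_mul_eq_self_of_mul_self_eq_neg_one {R : Type*} [Ring R] {μ : R}
    (hμ : μ * μ = -1) (q : R) : μ * (μ * q * μ) * μ = q := by
  calc μ * (μ * q * μ) * μ = (μ * μ) * q * (μ * μ) := by simp only [mul_assoc]
    _ = q := by rw [hμ, neg_one_mul, mul_neg_one, neg_neg]

theorem half_sub_conj_mul_half_add_conj_conj_eq_neg {R : Type*} [DivisionRing R] {μ : R}
    (hμ : μ * μ = -1) (g : R → R) (q : R) :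
    (μ * q * μ - μ * (μ * q * μ) * μ) / 2 * g ((μ * q * μ + μ * (μ * q * μ) * μ) / 2) =
      -((q - μ * q * μ) / 2 * g ((q + μ * q * μ) / 2)) := by
  rw [mul_mul_mul_mul_eq_self_of_mul_self_eq_neg_one hμ, add_comm (μ * q * μ) q,
    ← neg_sub q, neg_div, neg_mul]

theorem second_order_structure_mu1_mu1_proper_general
    {Ω : Type*} [MeasurableSpace Ω] (P : Measure Ω)
    (μ1 μ2 : ℍ[ℝ]) (h1re : μ1.re = 0) (h1 : ‖μ1‖ = 1)
    (Q : Ω → ℍ[ℝ]) (hQmeas : Measurable Q)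
    (hprop : Measure.map (fun ω => μ1 * Q ω * μ1) P = Measure.map Q P)
    (Z1 Z2 : Ω → ℍ[ℝ])
    (hZ1 : ∀ ω, Z1 ω = (Q ω - μ1 * Q ω * μ1) / 2)
    (hZ2 : ∀ ω, Z2 ω = -((Q ω + μ1 * Q ω * μ1) / 2) * μ2) :
    (∫ ω, Z1 ω * Z2 ω ∂P) = 0 ∧
    (∫ ω, Z1 ω * star (Z2 ω) ∂P) = 0 := by
  have hμ1 := Quaternion.mul_self_eq_neg_one_s18 h1re h1
  have hconj : Measurable fun q : ℍ[ℝ] => μ1 * q * μ1 := by fun_prop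
  have expectation_odd_eq_zero (g : ℍ[ℝ] → ℍ[ℝ]) (hg : Continuous g) :
      ∫ ω, (Q ω - μ1 * Q ω * μ1) / 2 * g ((Q ω + μ1 * Q ω * μ1) / 2) ∂P = 0 :=
    integral_comp_eq_zero_of_map_eq_of_odd (F := fun q => (q - μ1 * q * μ1) / 2 *
      g ((q + μ1 * q * μ1) / 2)) hQmeas.aemeasurable hconj hprop
      (by fun_prop) (half_sub_conj_mul_half_add_conj_conj_eq_neg hμ1 g)
  simp only [hZ1, hZ2]
  exact ⟨expectation_odd_eq_zero (fun z => -z * μ2) (by fun_prop),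
    expectation_odd_eq_zero (fun z => star (-z * μ2)) (by fun_prop)⟩

/-- Second-order structure of a `(μ1, μ1)`-proper quaternion random variable
(invariant under `q ↦ μ1·q·μ1`): its Cayley–Dickson components are neither
correlated nor pseudo-correlated: `E[Z1·Z2] = 0` and `E[Z1·star(Z2)] = 0`. -/
theorem second_order_structure_mu1_mu1_proper
    {Ω : Type*} [MeasurableSpace Ω] (P : Measure Ω) [IsProbabilityMeasure P]
    (μ1 μ2 : ℍ[ℝ]) (h1re : μ1.re = 0) (h1 : ‖μ1‖ = 1)
    (h2re : μ2.re = 0) (h2 : ‖μ2‖ = 1) (horth : (μ1 * μ2).re = 0)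
    (Q : Ω → ℍ[ℝ]) (hQmeas : Measurable Q) (hQ : MemLp Q 2 P)
    (hprop : Measure.map (fun ω => μ1 * Q ω * μ1) P = Measure.map Q P)
    (Z1 Z2 : Ω → ℍ[ℝ])
    (hZ1 : ∀ ω, Z1 ω = (Q ω - μ1 * Q ω * μ1) / 2)
    (hZ2 : ∀ ω, Z2 ω = -((Q ω + μ1 * Q ω * μ1) / 2) * μ2) :
    (∫ ω, Z1 ω * Z2 ω ∂P) = 0 ∧
    (∫ ω, Z1 ω * star (Z2 ω) ∂P) = 0 :=
  second_order_structure_mu1_mu1_proper_general P μ1 μ2 h1re h1 Q hQmeas hprop Z1 Z2 hZ1 hZ2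
end
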